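/- Let d ≥ 1 and n ≥ 0 be integers, λ > 0, L > 0, and let x_1, …, x_n ∈ ℝ^d satisfy ‖x_s‖₂ ≤ L for all s. Set G := λ I_d + Σ_{s=1}^n x_s x_sᵀ. Then det(G) ≤ ( (d λ + n L²) / d )^d. -/

import Mathlib

open Matrix Finset

/-- Euclidean norm on ℝ^d. -/
noncomputable def enorm2 {d : ℕ} (x : Fin d → ℝ) : ℝ :=
  Real.sqrt (∑ i, (x i) ^ 2)

/-!
The matrix `G` is positive semidefinite, so by AM-GM on its eigenvalues
`det G ≤ (tr G / d) ^ d`, and `tr G = d λ + ∑ ‖x_s‖² ≤ d λ + n L²`.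
-/

theorem Finset.prod_le_sum_div_card_pow {ι : Type*} (s : Finset ι) {f : ι → ℝ}
    (hf : ∀ i ∈ s, 0 ≤ f i) : ∏ i ∈ s, f i ≤ ((∑ i ∈ s, f i) / #s) ^ #s := by
  rcases s.eq_empty_or_nonempty with rfl | hs
  · simp
  have hcard : (0 : ℝ) < #s := by exact_mod_cast hs.card_pos
  have amgm := Real.geom_mean_le_arith_mean s (fun _ ↦ 1) f (fun _ _ ↦ zero_le_one)
    (by simpa using hcard) hf
  simp only [Real.rpow_one, one_mul, sum_const, nsmul_eq_mul, mul_one] at amgm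
  calc ∏ i ∈ s, f i = ((∏ i ∈ s, f i) ^ (#s : ℝ)⁻¹) ^ #s := by
        rw [← Real.rpow_natCast, ← Real.rpow_mul (prod_nonneg hf),
          inv_mul_cancel₀ hcard.ne', Real.rpow_one]
    _ ≤ ((∑ i ∈ s, f i) / #s) ^ #s := by
        gcongr
        exact Real.rpow_nonneg (prod_nonneg hf) _

theorem Matrix.PosSemidef.det_le_trace_div_card_pow {n : Type*} [Fintype n] [DecidableEq n]
    {A : Matrix n n ℝ} (hA : A.PosSemidef) :
    A.det ≤ (A.trace / Fintype.card n) ^ Fintype.card n := by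
  rw [hA.isHermitian.det_eq_prod_eigenvalues, hA.isHermitian.trace_eq_sum_eigenvalues]
  simpa using prod_le_sum_div_card_pow univ fun i _ ↦ hA.eigenvalues_nonneg i

theorem Matrix.posSemidef_vecMulVec_self {n : Type*} [Finite n] (v : n → ℝ) :
    (vecMulVec v v).PosSemidef := by
  simpa using posSemidef_vecMulVec_self_star v

theorem trace_vecMulVec_self_eq_enorm2_sq {d : ℕ} (v : Fin d → ℝ) :
    (vecMulVec v v).trace = enorm2 v ^ 2 := by
  rw [trace_vecMulVec, enorm2, Real.sq_sqrt (sum_nonneg fun i _ ↦ sq_nonneg (v i))]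
  simp [dotProduct, sq]

theorem det_le_trace_bound_general (d n : ℕ) (lam L : ℝ)
    (hlam : 0 < lam) (x : ℕ → Fin d → ℝ)
    (hx : ∀ s < n, enorm2 (x s) ≤ L) :
    (lam • (1 : Matrix (Fin d) (Fin d) ℝ) +
        ∑ s ∈ Finset.range n, vecMulVec (x s) (x s)).det ≤
      (((d : ℝ) * lam + (n : ℝ) * L ^ 2) / (d : ℝ)) ^ d := by
  set G := lam • (1 : Matrix (Fin d) (Fin d) ℝ) + ∑ s ∈ range n, vecMulVec (x s) (x s)
  have hG : G.PosSemidef := (PosSemidef.one.smul hlam.le).add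
    (posSemidef_sum _ fun s _ ↦ posSemidef_vecMulVec_self (x s))
  have htrace : G.trace ≤ d * lam + n * L ^ 2 := by
    have hsum : ∑ s ∈ range n, enorm2 (x s) ^ 2 ≤ n * L ^ 2 :=
      calc ∑ s ∈ range n, enorm2 (x s) ^ 2 ≤ ∑ s ∈ range n, L ^ 2 :=
            sum_le_sum fun s hs ↦
              pow_le_pow_left₀ (Real.sqrt_nonneg _) (hx s (mem_range.mp hs)) 2
        _ = n * L ^ 2 := by simp
    simp only [G, trace_add, trace_smul, trace_one, trace_sum, trace_vecMulVec_self_eq_enorm2_sq]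
    simpa [mul_comm] using hsum
  calc G.det ≤ (G.trace / d) ^ d := by simpa using hG.det_le_trace_div_card_pow
    _ ≤ ((d * lam + n * L ^ 2) / d) ^ d := by
      gcongr
      exact div_nonneg hG.trace_nonneg d.cast_nonneg

theorem det_le_trace_bound (d n : ℕ) (hd : 1 ≤ d) (lam L : ℝ)
    (hlam : 0 < lam) (hL : 0 < L) (x : ℕ → Fin d → ℝ)
    (hx : ∀ s < n, enorm2 (x s) ≤ L) :
    (lam • (1 : Matrix (Fin d) (Fin d) ℝ) +
        ∑ s ∈ Finset.range n, vecMulVec (x s) (x s)).det ≤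
      (((d : ℝ) * lam + (n : ℝ) * L ^ 2) / (d : ℝ)) ^ d :=
  det_le_trace_bound_general d n lam L hlam x hx
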